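/- arXiv:2503.08265 — 6 statements merged into one kernel-verified Lean document; each statement's English description precedes it below -/
import Mathlib

section
/- Let (U,τ_U) and (V,τ_V) be topological structures for L with underlying sets A and B, assume AP(U) separates the points of A and AP(V) separates the points of B, and let T be a non-vanishing linear isometry of AP(U) onto AP(V), so that (Tf)(y) = w(y)·f(h(y)) as in part (i). Suppose Φ ∈ L is a binary function symbol whose interpretations Φ_U and Φ_V are associative and have neutral elements 1_U ∈ A and 1_V ∈ B respectively, and suppose T commutes with translations: there is a map λ : B → A such that for all f ∈ AP(U) and all y ∈ B, (Tf)∘(Φ_V)_y = T(f∘(Φ_U)_{λ(y)}), where Φ_y denotes the right translation z ↦ Φ(z,y). Then there exists b ∈ B such that the map k : B → A defined by k(y) = h(Φ_V(b,y)) is a Φ-isomorphism of V onto U: k is a bijection of B onto A, k(Φ_V(z,y)) = Φ_U(k(z),k(y)) for all z,y ∈ B, and k(1_V) = 1_U. -/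
open FirstOrder UniformFun
open scoped UniformConvergence Topology

/-- Fill the `j`-th coordinate with `a`, the others given by `x`. -/
def Fill {A : Type*} {n : ℕ} (j : Fin n) (x : {i : Fin n // i ≠ j} → A) (a : A) : Fin n → A :=
  fun i => if h : i = j then a else x ⟨i, h⟩

/-- A simple translation of the structure. -/
def IsSimpleTranslation (L : FirstOrder.Language) (A : Type*) [L.Structure A] (t : A → A) : Prop :=
  ∃ (n : ℕ) (Φ : L.Functions n) (j : Fin n) (x : {i : Fin n // i ≠ j} → A),
    t = fun a => Language.Structure.funMap Φ (Fill j x a)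

/-- The translation semigroup `S(U)`: finite compositions of simple translations. -/
inductive IsTranslation (L : FirstOrder.Language) (A : Type*) [L.Structure A] : (A → A) → Prop
  | simple {t : A → A} : IsSimpleTranslation L A t → IsTranslation L A t
  | comp {s t : A → A} : IsTranslation L A s → IsTranslation L A t → IsTranslation L A (s ∘ t)

/-- A bounded continuous `f : A → ℂ` is almost periodic if for every `n`-ary function symbol `Φ`,
every translation `t ∈ S(U)` and every coordinate `j`, the family of functions
`x ↦ f (t (Φ (x₁, …, a, …, xₙ)))`, indexed by `a ∈ A`, is relatively compact in
`C_∞(A^{n-1})` (with the uniform convergence/supremum topology). -/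
def IsAlmostPeriodic (L : FirstOrder.Language) (A : Type*) [TopologicalSpace A] [L.Structure A]
    (f : A → ℂ) : Prop :=
  Continuous f ∧ (∃ C, ∀ a, ‖f a‖ ≤ C) ∧
    ∀ (n : ℕ) (Φ : L.Functions n) (t : A → A), IsTranslation L A t →
      ∀ j : Fin n,
        IsCompact (closure {u : ({i : Fin n // i ≠ j} → A) →ᵤ ℂ |
          ∃ a : A, u = UniformFun.ofFun fun x => f (t (Language.Structure.funMap Φ (Fill j x a)))})

/-- The almost periodic functions, as a subtype of `A →ᵤ ℂ`. -/
abbrev APf (L : FirstOrder.Language) (A : Type*) [TopologicalSpace A] [L.Structure A] :=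
  {f : A →ᵤ ℂ // IsAlmostPeriodic L A (UniformFun.toFun f)}

/-!
Testing the commutation relation on the constant function `1` gives `w (z * y) = w z`, so `w` is
constant, and testing it on an arbitrary `f` gives `h (z * y) = h z * λ y`; since `T` is onto and
`AP(V)` separates points, `h` is injective. If `h b = 1`, then `y ↦ h (b * y)` is the
multiplicative map `λ = (h 1)⁻¹ * h`, provided `h 1` is a unit. It has the right inverse `λ b`, and
in `U` right inverses are two-sided because the right translates of almost periodic functions form
relatively compact families.
-/

open Function Set
open scoped Uniformity

theorem TotallyBounded.exists_lt_mem_of_forall_mem {α : Type*} [UniformSpace α] {s : Set α}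
    (hs : TotallyBounded s) {u : ℕ → α} (hu : ∀ n, u n ∈ s) {V : SetRel α α} (hV : V ∈ 𝓤 α) :
    ∃ m n, m < n ∧ (u m, u n) ∈ V := by
  obtain ⟨W, hW, hWsymm, hWV⟩ := comp_symm_of_uniformity hV
  obtain ⟨t, ht, hst⟩ := hs W hW
  have hcover : ∀ n, ∃ y : t, (u n, (y : α)) ∈ W := fun n => by
    obtain ⟨y, hy, hny⟩ := mem_iUnion₂.mp (hst (hu n))
    exact ⟨⟨y, hy⟩, hny⟩
  choose y hy using hcover
  have : Finite t := ht.to_subtype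
  obtain ⟨m, n, hne, hmn⟩ := Finite.exists_ne_map_eq_of_infinite y
  have hWW : ∀ i j, y i = y j → (u i, u j) ∈ V := fun i j hij =>
    hWV (SetRel.prodMk_mem_comp (hy i) (hij ▸ hWsymm (hy j)))
  rcases hne.lt_or_gt with hlt | hlt
  · exact ⟨m, n, hlt, hWW m n hmn⟩
  · exact ⟨n, m, hlt, hWW n m hmn.symm⟩

/-- If `c * d = 1`, then `d * c` and `1` are both close to a power of `d` after translation by
suitable powers of `c`; compactness of the translates `z ↦ f (z * d ^ n)` makes them arbitrarily
close, so separation forces `d * c = 1`. -/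
theorem isDedekindFiniteMonoid_of_totallyBounded_range_mul_right {M ι β : Type*} [Monoid M]
    [MetricSpace β] (F : ι → M → β) (hsep : ∀ x y : M, x ≠ y → ∃ i, F i x ≠ F i y)
    (hF : ∀ i, TotallyBounded (range fun a : M => UniformFun.ofFun fun z => F i (z * a))) :
    IsDedekindFiniteMonoid M := by
  refine ⟨fun {c d} hcd => ?_⟩
  by_contra hne
  obtain ⟨i, hi⟩ := hsep _ _ hne
  refine hi (eq_of_forall_dist_le fun ε hε => ?_)
  have hV : UniformFun.gen M β {p | dist p.1 p.2 < ε / 2} ∈ 𝓤 (M →ᵤ β) :=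
    (UniformFun.hasBasis_uniformity M β).mem_of_mem (Metric.dist_mem_uniformity (half_pos hε))
  obtain ⟨m, n, hmn, hclose⟩ :=
    (hF i).exists_lt_mem_of_forall_mem (fun n => mem_range_self (d ^ n)) hV
  obtain ⟨k, rfl⟩ : ∃ k, n = m + 1 + k := ⟨n - (m + 1), by omega⟩
  have hpow : ∀ j, c ^ j * d ^ j = 1 := fun j => pow_mul_pow_eq_one j hcd
  have h₁ : c ^ m * d ^ (m + 1 + k) = d ^ (k + 1) := by
    rw [pow_add, pow_succ, ← mul_assoc, ← mul_assoc, hpow, one_mul, ← pow_succ']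
  have h₂ : d * c ^ (m + 1) * d ^ m = d * c := by
    rw [pow_succ', mul_assoc, mul_assoc, hpow, mul_one]
  have h₃ : d * c ^ (m + 1) * d ^ (m + 1 + k) = d ^ (k + 1) := by
    rw [pow_add d (m + 1), ← mul_assoc, mul_assoc d, hpow, mul_one, ← pow_succ']
  have hd₁ := hclose (c ^ m)
  have hd₂ := hclose (d * c ^ (m + 1))
  simp only [UniformFun.toFun_ofFun, mem_ofPred_eq] at hd₁ hd₂
  rw [hpow, h₁] at hd₁
  rw [h₂, h₃] at hd₂
  calc dist (F i (d * c)) (F i 1)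
      ≤ dist (F i (d * c)) (F i (d ^ (k + 1))) + dist (F i (d ^ (k + 1))) (F i 1) :=
        dist_triangle _ _ _
    _ ≤ ε / 2 + ε / 2 := by rw [dist_comm _ (F i 1)]; exact add_le_add hd₂.le hd₁.le
    _ = ε := add_halves ε

theorem fill_zero_const {A : Type*} (a z : A) :
    Fill (0 : Fin 2) (fun _ : {i : Fin 2 // i ≠ 0} => a) z = ![z, a] := by
  funext i; fin_cases i <;> simp [Fill]

theorem fill_one_const {A : Type*} (z a : A) :
    Fill (1 : Fin 2) (fun _ : {i : Fin 2 // i ≠ 1} => z) a = ![z, a] := by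
  funext i; fin_cases i <;> simp [Fill]

theorem isAlmostPeriodic_const {L : FirstOrder.Language} {A : Type*} [TopologicalSpace A]
    [L.Structure A] (c : ℂ) : IsAlmostPeriodic L A fun _ => c := by
  refine ⟨continuous_const, ⟨‖c‖, fun _ => le_rfl⟩, fun n Φ t _ j => ?_⟩
  refine (isCompact_singleton (x := UniformFun.ofFun fun _ => c)).closure_of_subset ?_
  rintro u ⟨-, rfl⟩
  rfl

section MonoidStructure

variable {L : FirstOrder.Language} {A : Type*} [L.Structure A] [Monoid A] {Φ : L.Functions 2}
  (hΦ : ∀ z y : A, z * y = Language.Structure.funMap Φ ![z, y])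
include hΦ

theorem isSimpleTranslation_mul_right (a : A) : IsSimpleTranslation L A (· * a) :=
  ⟨2, Φ, 0, fun _ => a, funext fun z => by rw [hΦ, fill_zero_const]⟩

theorem isTranslation_id : IsTranslation L A id := by
  rw [show (id : A → A) = (· * 1) from funext fun z => (mul_one z).symm]
  exact .simple (isSimpleTranslation_mul_right hΦ 1)

variable [TopologicalSpace A]

theorem IsAlmostPeriodic.comp_mul_right
    (hA : ∀ (n : ℕ) (Ψ : L.Functions n),
      Continuous fun x : Fin n → A => Language.Structure.funMap Ψ x)
    {f : A → ℂ} (hf : IsAlmostPeriodic L A f) (a : A) :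
    IsAlmostPeriodic L A fun z => f (z * a) := by
  obtain ⟨hcont, hbdd, htrans⟩ := hf
  have hmul : Continuous fun z : A => z * a := by
    simp only [hΦ]
    refine (hA 2 Φ).comp (continuous_pi fun i => ?_)
    fin_cases i <;> simp [continuous_const, continuous_id']
  refine ⟨hcont.comp hmul, ?_, fun n Ψ t ht j => ?_⟩
  · obtain ⟨C, hC⟩ := hbdd
    exact ⟨C, fun z => hC _⟩
  · exact htrans n Ψ _ ((IsTranslation.simple (isSimpleTranslation_mul_right hΦ a)).comp ht) j

/-- The family `a ↦ f (· * a)` is the image of the family `a ↦ f ∘ Φ(·, a)` from the definition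
(with the identity translation) under precomposition with the diagonal. -/
theorem IsAlmostPeriodic.totallyBounded_range_mul_right {f : A → ℂ}
    (hf : IsAlmostPeriodic L A f) :
    TotallyBounded (range fun a : A => UniformFun.ofFun fun z => f (z * a)) := by
  have hK := hf.2.2 2 Φ id (isTranslation_id hΦ) 1
  have hdiag := (UniformFun.precomp_uniformContinuous (β := ℂ)
    (f := fun z : A => fun _ : {i : Fin 2 // i ≠ 1} => z))
  refine (hK.totallyBounded.subset subset_closure).image hdiag |>.subset ?_
  rintro _ ⟨a, rfl⟩
  refine ⟨_, ⟨a, rfl⟩, ?_⟩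
  simp only [UniformFun.toFun_ofFun]
  congr 1
  funext z
  simp [fill_one_const, hΦ]

end MonoidStructure

section Representation

variable {L : FirstOrder.Language} {A B : Type*} [TopologicalSpace A] [L.Structure A]
  [TopologicalSpace B] [L.Structure B] {T : APf L A → APf L B} {h : B → A} {w : B → ℂ}
  (hrep : ∀ (f : APf L A) (y : B), UniformFun.toFun (T f).1 y = w y * UniformFun.toFun f.1 (h y))
include hrep

theorem weight_mul_right [Mul A] [Mul B] {lam : B → A}
    (hcomm : ∀ (f : APf L A) (y : B) (g : APf L A),
      UniformFun.toFun g.1 = (fun z : A => UniformFun.toFun f.1 (z * lam y)) →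
      (fun z : B => UniformFun.toFun (T f).1 (z * y)) = UniformFun.toFun (T g).1)
    (z y : B) : w (z * y) = w z := by
  let one : APf L A := ⟨UniformFun.ofFun fun _ => 1, isAlmostPeriodic_const 1⟩
  simpa [hrep, one] using congrFun (hcomm one y one rfl) z

theorem map_mul_eq_mul_of_commute [Monoid A] [Mul B] {Φ : L.Functions 2}
    (hΦ : ∀ z y : A, z * y = Language.Structure.funMap Φ ![z, y])
    (hA : ∀ (n : ℕ) (Ψ : L.Functions n),
      Continuous fun x : Fin n → A => Language.Structure.funMap Ψ x)
    (hsepA : ∀ x y : A, x ≠ y → ∃ f : APf L A, UniformFun.toFun f.1 x ≠ UniformFun.toFun f.1 y)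
    (hw : ∀ y, w y ≠ 0) {lam : B → A}
    (hcomm : ∀ (f : APf L A) (y : B) (g : APf L A),
      UniformFun.toFun g.1 = (fun z : A => UniformFun.toFun f.1 (z * lam y)) →
      (fun z : B => UniformFun.toFun (T f).1 (z * y)) = UniformFun.toFun (T g).1)
    (z y : B) : h (z * y) = h z * lam y := by
  by_contra hne
  obtain ⟨f, hf⟩ := hsepA _ _ hne
  let g : APf L A := ⟨UniformFun.ofFun fun x => UniformFun.toFun f.1 (x * lam y),
    f.2.comp_mul_right hΦ hA (lam y)⟩
  have hfg := congrFun (hcomm f y g rfl) z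
  rw [hrep, hrep, weight_mul_right hrep hcomm] at hfg
  exact hf (mul_left_cancel₀ (hw z) hfg)

theorem injective_of_weight_mul_right [MulOneClass B] (hT : Surjective T)
    (hsepB : ∀ x y : B, x ≠ y → ∃ g : APf L B, UniformFun.toFun g.1 x ≠ UniformFun.toFun g.1 y)
    (hwmul : ∀ z y : B, w (z * y) = w z) : Injective h := by
  intro y₁ y₂ hy
  by_contra hne
  obtain ⟨g, hg⟩ := hsepB _ _ hne
  obtain ⟨f, rfl⟩ := hT g
  have hw : w y₁ = w y₂ := by rw [← one_mul y₁, ← one_mul y₂, hwmul, hwmul]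
  exact hg (by rw [hrep, hrep, hy, hw])

end Representation

theorem exists_mulEquiv_of_map_mul_eq_mul {M N : Type*} [Monoid M] [Monoid N]
    [IsDedekindFiniteMonoid M] {h : N → M} (hh : Bijective h) {lam : N → M}
    (hlam : ∀ z y, h (z * y) = h z * lam y) :
    ∃ (b : N) (e : N ≃* M), ∀ y, e y = h (b * y) := by
  obtain ⟨b, hb⟩ := hh.2 1
  have hlam_eq : ∀ y, h (b * y) = lam y := fun y => by rw [hlam, hb, one_mul]
  have hcd : h 1 * lam b = 1 := by rw [← hlam, one_mul, hb]
  let u : Mˣ := ⟨h 1, lam b, hcd, mul_eq_one_symm hcd⟩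
  have hbij : Bijective lam := by
    convert (Units.mulLeft_bijective u⁻¹).comp hh using 1
    funext y
    have hy : h y = h 1 * lam y := by rw [← hlam, one_mul]
    simp only [comp_apply, Units.inv_mk, u]
    rw [hy, ← mul_assoc, mul_eq_one_symm hcd, one_mul]
  let f : N →ₙ* M :=
    { toFun := lam
      map_mul' := fun z y => by rw [← hlam_eq, ← mul_assoc, hlam, hlam_eq] }
  exact ⟨b, MulEquiv.ofBijective f hbij, fun y => (hlam_eq y).symm⟩

theorem isometry_translation_commuting_isomorphism_general (L : FirstOrder.Language) (A B : Type*)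
    [TopologicalSpace A] [L.Structure A]
    [TopologicalSpace B] [L.Structure B]
    (hA : ∀ (n : ℕ) (Φ : L.Functions n),
      Continuous fun x : Fin n → A => Language.Structure.funMap Φ x)
    (hsepA : ∀ x y : A, x ≠ y → ∃ f : APf L A, UniformFun.toFun f.1 x ≠ UniformFun.toFun f.1 y)
    (hsepB : ∀ x y : B, x ≠ y → ∃ g : APf L B, UniformFun.toFun g.1 x ≠ UniformFun.toFun g.1 y)
    (T : APf L A → APf L B)
    (hTbij : Function.Bijective T)
    -- the representation of `T` provided by part (i)
    (h : B → A) (w : B → ℂ)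
    (hw : ∀ y : B, ‖w y‖ = 1)
    (hrep : ∀ (f : APf L A) (y : B),
      UniformFun.toFun (T f).1 y = w y * UniformFun.toFun f.1 (h y))
    (hsurj : Function.Surjective h)
    -- the binary symbol `Φ` and its interpretations
    (Φ : L.Functions 2)
    (mU : A → A → A) (hmU : ∀ z y : A, mU z y = Language.Structure.funMap Φ ![z, y])
    (mV : B → B → B)
    (hUassoc : ∀ x y z : A, mU (mU x y) z = mU x (mU y z))
    (hVassoc : ∀ x y z : B, mV (mV x y) z = mV x (mV y z))
    (oneU : A) (honeU : ∀ x : A, mU x oneU = x ∧ mU oneU x = x)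
    (oneV : B) (honeV : ∀ y : B, mV y oneV = y ∧ mV oneV y = y)
    -- `T` commutes with (`Φ`-)translations
    (lam : B → A)
    (hcomm : ∀ (f : APf L A) (y : B) (g : APf L A),
      UniformFun.toFun g.1 = (fun z : A => UniformFun.toFun f.1 (mU z (lam y))) →
      (fun z : B => UniformFun.toFun (T f).1 (mV z y)) = UniformFun.toFun (T g).1) :
    ∃ b : B,
      Function.Bijective (fun y : B => h (mV b y)) ∧
      (∀ z y : B, h (mV b (mV z y)) = mU (h (mV b z)) (h (mV b y))) ∧
      h (mV b oneV) = oneU := by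
  let _ : Monoid A :=
    { mul := mU
      mul_assoc := hUassoc
      one := oneU
      one_mul := fun x => (honeU x).2
      mul_one := fun x => (honeU x).1 }
  let _ : Monoid B :=
    { mul := mV
      mul_assoc := hVassoc
      one := oneV
      one_mul := fun y => (honeV y).2
      mul_one := fun y => (honeV y).1 }
  have hwne : ∀ y, w y ≠ 0 := fun y => norm_ne_zero_iff.mp (by rw [hw]; exact one_ne_zero)
  have hmul : ∀ z y : B, h (z * y) = h z * lam y :=
    map_mul_eq_mul_of_commute hrep hmU hA hsepA hwne hcomm
  have hinj : Function.Injective h :=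
    injective_of_weight_mul_right hrep hTbij.2 hsepB (weight_mul_right hrep hcomm)
  have : IsDedekindFiniteMonoid A :=
    isDedekindFiniteMonoid_of_totallyBounded_range_mul_right (fun f : APf L A => f.1.toFun) hsepA
      fun f => f.2.totallyBounded_range_mul_right hmU
  obtain ⟨b, e, he⟩ := exists_mulEquiv_of_map_mul_eq_mul ⟨hinj, hsurj⟩ hmul
  have hk : ∀ y, h (mV b y) = e y := fun y => (he y).symm
  refine ⟨b, ?_⟩
  simp only [hk]
  exact ⟨e.bijective, map_mul e, map_one e⟩

/-- **Theorem 3.1(ii).** Let `T` be a non-vanishing linear isometry of `AP(U)` onto `AP(V)`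
represented, as in part (i), by a surjection `h : B → A` and a unimodular `w : B → ℂ` via
`(Tf)(y) = w(y)·f(h(y))`. Suppose `Φ ∈ L` is a binary function symbol whose interpretations are
associative with neutral elements `1_U`, `1_V`, and that `T` commutes with translations via
`λ : B → A`. Then there is `b ∈ B` such that `k := y ↦ h(Φ_V(b,y))` is a `Φ`-isomorphism of `V`
onto `U`: a bijection with `k(Φ_V(z,y)) = Φ_U(k(z),k(y))` and `k(1_V) = 1_U`. -/
theorem isometry_translation_commuting_isomorphism (L : FirstOrder.Language) (A B : Type*)
    [TopologicalSpace A] [L.Structure A] [Nonempty A]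
    [TopologicalSpace B] [L.Structure B] [Nonempty B]
    (hA : ∀ (n : ℕ) (Φ : L.Functions n),
      Continuous fun x : Fin n → A => Language.Structure.funMap Φ x)
    (hB : ∀ (n : ℕ) (Φ : L.Functions n),
      Continuous fun x : Fin n → B => Language.Structure.funMap Φ x)
    (hsepA : ∀ x y : A, x ≠ y → ∃ f : APf L A, UniformFun.toFun f.1 x ≠ UniformFun.toFun f.1 y)
    (hsepB : ∀ x y : B, x ≠ y → ∃ g : APf L B, UniformFun.toFun g.1 x ≠ UniformFun.toFun g.1 y)
    (T : APf L A → APf L B)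
    (hTbij : Function.Bijective T)
    (hTadd : ∀ f g h : APf L A,
      UniformFun.toFun h.1 = UniformFun.toFun f.1 + UniformFun.toFun g.1 →
      UniformFun.toFun (T h).1 = UniformFun.toFun (T f).1 + UniformFun.toFun (T g).1)
    (hTsmul : ∀ (c : ℂ) (f g : APf L A),
      UniformFun.toFun g.1 = c • UniformFun.toFun f.1 →
      UniformFun.toFun (T g).1 = c • UniformFun.toFun (T f).1)
    (hTiso : ∀ f g : APf L A,
      (⨆ x : A, ‖UniformFun.toFun f.1 x - UniformFun.toFun g.1 x‖) =
        ⨆ y : B, ‖UniformFun.toFun (T f).1 y - UniformFun.toFun (T g).1 y‖)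
    (hTnv : ∀ f : APf L A,
      (∀ x : A, UniformFun.toFun f.1 x ≠ 0) ↔ (∀ y : B, UniformFun.toFun (T f).1 y ≠ 0))
    -- the representation of `T` provided by part (i)
    (h : B → A) (w : B → ℂ)
    (hw : ∀ y : B, ‖w y‖ = 1)
    (hrep : ∀ (f : APf L A) (y : B),
      UniformFun.toFun (T f).1 y = w y * UniformFun.toFun f.1 (h y))
    (hsurj : Function.Surjective h)
    -- the binary symbol `Φ` and its interpretations
    (Φ : L.Functions 2)
    (mU : A → A → A) (hmU : ∀ z y : A, mU z y = Language.Structure.funMap Φ ![z, y])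
    (mV : B → B → B) (hmV : ∀ z y : B, mV z y = Language.Structure.funMap Φ ![z, y])
    (hUassoc : ∀ x y z : A, mU (mU x y) z = mU x (mU y z))
    (hVassoc : ∀ x y z : B, mV (mV x y) z = mV x (mV y z))
    (oneU : A) (honeU : ∀ x : A, mU x oneU = x ∧ mU oneU x = x)
    (oneV : B) (honeV : ∀ y : B, mV y oneV = y ∧ mV oneV y = y)
    -- `T` commutes with (`Φ`-)translations
    (lam : B → A)
    (hcomm : ∀ (f : APf L A) (y : B) (g : APf L A),
      UniformFun.toFun g.1 = (fun z : A => UniformFun.toFun f.1 (mU z (lam y))) →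
      (fun z : B => UniformFun.toFun (T f).1 (mV z y)) = UniformFun.toFun (T g).1) :
    ∃ b : B,
      Function.Bijective (fun y : B => h (mV b y)) ∧
      (∀ z y : B, h (mV b (mV z y)) = mU (h (mV b z)) (h (mV b y))) ∧
      h (mV b oneV) = oneU :=
  isometry_translation_commuting_isomorphism_general L A B hA hsepA hsepB T hTbij h w hw hrep hsurj
    Φ mU hmU mV hUassoc hVassoc oneU honeU oneV honeV lam hcomm
end

section
/- Let (U,τ) be a topological structure for L with underlying set A. Then AP(U) is a closed subalgebra of C_∞(A) containing the constant functions: AP(U) is closed under addition, multiplication and scalar multiplication, contains all constant complex-valued functions, and is closed in C_∞(A) with respect to the supremum norm. -/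
open FirstOrder UniformFun
open scoped UniformConvergence Topology
open scoped Uniformity

section Helpers

variable {X : Type*}

lemma bdd_isClosed (C : ℝ) :
    IsClosed {u : X →ᵤ ℂ | ∀ x, ‖UniformFun.toFun u x‖ ≤ C} := by
  have h : {u : X →ᵤ ℂ | ∀ x, ‖UniformFun.toFun u x‖ ≤ C} =
      ⋂ x, (fun u : X →ᵤ ℂ => UniformFun.toFun u x) ⁻¹' {z : ℂ | ‖z‖ ≤ C} := by
    ext u; simp [Set.mem_iInter]
  rw [h]
  exact isClosed_iInter fun x =>
    (isClosed_le continuous_norm continuous_const).preimage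
      (UniformFun.uniformContinuous_eval ℂ x).continuous

lemma image2_op_isCompact {K₁ K₂ : Set (X →ᵤ ℂ)} (hK₁ : IsCompact K₁) (hK₂ : IsCompact K₂)
    (op : ℂ → ℂ → ℂ) (C : ℝ)
    (hb₁ : ∀ u ∈ K₁, ∀ x, ‖UniformFun.toFun u x‖ ≤ C)
    (hb₂ : ∀ u ∈ K₂, ∀ x, ‖UniformFun.toFun u x‖ ≤ C)
    (hop : ∀ ε > (0:ℝ), ∃ δ > (0:ℝ), ∀ a b a' b' : ℂ, ‖a‖ ≤ C → ‖b'‖ ≤ C →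
      dist a a' < δ → dist b b' < δ → dist (op a b) (op a' b') < ε) :
    IsCompact (Set.image2 (fun u v : X →ᵤ ℂ =>
      UniformFun.ofFun fun x => op (UniformFun.toFun u x) (UniformFun.toFun v x)) K₁ K₂) := by
  rw [← Set.image_prod]
  refine (hK₁.prod hK₂).image_of_continuousOn ?_
  intro p hp
  have : Filter.Tendsto (fun q : (X →ᵤ ℂ) × (X →ᵤ ℂ) =>
      UniformFun.ofFun fun x => op (UniformFun.toFun q.1 x) (UniformFun.toFun q.2 x))
      (𝓝[K₁ ×ˢ K₂] p)
      (𝓝 (UniformFun.ofFun fun x => op (UniformFun.toFun p.1 x) (UniformFun.toFun p.2 x))) := by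
    rw [UniformFun.tendsto_iff_tendstoUniformly, Metric.tendstoUniformly_iff]
    intro ε hε
    obtain ⟨δ, hδ, H⟩ := hop ε hε
    have hfst : Filter.Tendsto Prod.fst (𝓝[K₁ ×ˢ K₂] p) (𝓝 p.1) :=
      (continuous_fst.tendsto p).mono_left nhdsWithin_le_nhds
    have hsnd : Filter.Tendsto Prod.snd (𝓝[K₁ ×ˢ K₂] p) (𝓝 p.2) :=
      (continuous_snd.tendsto p).mono_left nhdsWithin_le_nhds
    have h1 := Metric.tendstoUniformly_iff.mp
      (UniformFun.tendsto_iff_tendstoUniformly.mp hfst) δ hδ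
    have h2 := Metric.tendstoUniformly_iff.mp
      (UniformFun.tendsto_iff_tendstoUniformly.mp hsnd) δ hδ
    filter_upwards [h1, h2, self_mem_nhdsWithin] with q hq1 hq2 hqs x
    exact H _ _ _ _ (hb₁ p.1 hp.1 x) (hb₂ q.2 hqs.2 x) (hq1 x) (hq2 x)
  exact this

lemma compact_closure_of_op (op : ℂ → ℂ → ℂ) (C : ℝ)
    (S₁ S₂ S₃ : Set (X →ᵤ ℂ))
    (h₁ : IsCompact (closure S₁)) (h₂ : IsCompact (closure S₂))
    (hb₁ : ∀ u ∈ S₁, ∀ x, ‖UniformFun.toFun u x‖ ≤ C)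
    (hb₂ : ∀ u ∈ S₂, ∀ x, ‖UniformFun.toFun u x‖ ≤ C)
    (hop : ∀ ε > (0:ℝ), ∃ δ > (0:ℝ), ∀ a b a' b' : ℂ, ‖a‖ ≤ C → ‖b'‖ ≤ C →
      dist a a' < δ → dist b b' < δ → dist (op a b) (op a' b') < ε)
    (hsub : S₃ ⊆ Set.image2 (fun u v : X →ᵤ ℂ =>
      UniformFun.ofFun fun x => op (UniformFun.toFun u x) (UniformFun.toFun v x))
      (closure S₁) (closure S₂)) :
    IsCompact (closure S₃) := by
  have hb₁' : ∀ u ∈ closure S₁, ∀ x, ‖UniformFun.toFun u x‖ ≤ C := fun u hu =>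
    closure_minimal (fun v hv => hb₁ v hv) (bdd_isClosed C) hu
  have hb₂' : ∀ u ∈ closure S₂, ∀ x, ‖UniformFun.toFun u x‖ ≤ C := fun u hu =>
    closure_minimal (fun v hv => hb₂ v hv) (bdd_isClosed C) hu
  have hK := image2_op_isCompact h₁ h₂ op C hb₁' hb₂' hop
  exact hK.of_isClosed_subset isClosed_closure (closure_minimal hsub hK.isClosed)

lemma hop_add (C : ℝ) : ∀ ε > (0:ℝ), ∃ δ > (0:ℝ), ∀ a b a' b' : ℂ, ‖a‖ ≤ C → ‖b'‖ ≤ C →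
    dist a a' < δ → dist b b' < δ → dist (a + b) (a' + b') < ε := by
  intro ε hε
  refine ⟨ε/2, by positivity, fun a b a' b' _ _ h1 h2 => ?_⟩
  calc dist (a + b) (a' + b') ≤ dist a a' + dist b b' := dist_add_add_le _ _ _ _
    _ < ε := by linarith

lemma hop_mul {C : ℝ} (hC0 : 0 ≤ C) :
    ∀ ε > (0:ℝ), ∃ δ > (0:ℝ), ∀ a b a' b' : ℂ, ‖a‖ ≤ C → ‖b'‖ ≤ C →
    dist a a' < δ → dist b b' < δ → dist (a * b) (a' * b') < ε := by
  intro ε hε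
  have h2C : (0:ℝ) < 2*C+1 := by linarith
  have hδ : 0 < ε/(2*C+1) := by positivity
  refine ⟨ε/(2*C+1), hδ, fun a b a' b' ha hb' h1 h2 => ?_⟩
  have key : dist (a*b) (a'*b') ≤ ‖a‖ * dist b b' + dist a a' * ‖b'‖ := by
    calc dist (a*b) (a'*b') ≤ dist (a*b) (a*b') + dist (a*b') (a'*b') := dist_triangle _ _ _
      _ = ‖a‖ * dist b b' + dist a a' * ‖b'‖ := by
          rw [dist_eq_norm, dist_eq_norm, dist_eq_norm, dist_eq_norm, ← mul_sub, ← sub_mul,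
            norm_mul, norm_mul]
  have e1 : ‖a‖ * dist b b' ≤ C * (ε/(2*C+1)) := mul_le_mul ha h2.le dist_nonneg hC0
  have e2 : dist a a' * ‖b'‖ ≤ (ε/(2*C+1)) * C := mul_le_mul h1.le hb' (norm_nonneg _) hδ.le
  have e3 : (ε/(2*C+1)) * (2*C+1) = ε := div_mul_cancel₀ _ (ne_of_gt h2C)
  have e4 : C * (ε/(2*C+1)) + (ε/(2*C+1)) * C = (ε/(2*C+1)) * (2*C+1) - (ε/(2*C+1)) := by ring
  linarith

lemma hop_const_mul (c : ℂ) (C : ℝ) :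
    ∀ ε > (0:ℝ), ∃ δ > (0:ℝ), ∀ a b a' b' : ℂ, ‖a‖ ≤ C → ‖b'‖ ≤ C →
    dist a a' < δ → dist b b' < δ → dist (c * b) (c * b') < ε := by
  intro ε hε
  have hn : (0:ℝ) < ‖c‖ + 1 := by positivity
  refine ⟨ε/(‖c‖+1), by positivity, fun a b a' b' _ _ _ h2 => ?_⟩
  calc dist (c*b) (c*b') = ‖c‖ * dist b b' := by
        rw [dist_eq_norm, dist_eq_norm, ← mul_sub, norm_mul]
    _ ≤ ‖c‖ * (ε/(‖c‖+1)) := mul_le_mul_of_nonneg_left h2.le (norm_nonneg c)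
    _ < (‖c‖+1) * (ε/(‖c‖+1)) := by
        exact mul_lt_mul_of_pos_right (by linarith) (by positivity)
    _ = ε := by field_simp

end Helpers

/-- **Proposition 2.1.** For a topological structure `(U,τ)` on `A`, the set `AP(U)` of almost
periodic functions is a closed subalgebra of `C_∞(A)` containing the constants. -/
theorem almostPeriodic_isClosed_subalgebra (L : FirstOrder.Language) (A : Type*)
    [TopologicalSpace A] [L.Structure A]
    (hA : ∀ (n : ℕ) (Φ : L.Functions n),
      Continuous fun x : Fin n → A => Language.Structure.funMap Φ x) :
    (∀ f g : A → ℂ, IsAlmostPeriodic L A f → IsAlmostPeriodic L A g →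
      IsAlmostPeriodic L A (f + g)) ∧
    (∀ f g : A → ℂ, IsAlmostPeriodic L A f → IsAlmostPeriodic L A g →
      IsAlmostPeriodic L A (f * g)) ∧
    (∀ (c : ℂ) (f : A → ℂ), IsAlmostPeriodic L A f → IsAlmostPeriodic L A (c • f)) ∧
    (∀ c : ℂ, IsAlmostPeriodic L A fun _ => c) ∧
    IsClosed {f : BoundedContinuousFunction A ℂ | IsAlmostPeriodic L A ⇑f} := by
  refine ⟨?_, ?_, ?_, ?_, ?_⟩
  · -- addition
    rintro f g ⟨hfc, ⟨Cf, hCf⟩, hfap⟩ ⟨hgc, ⟨Cg, hCg⟩, hgap⟩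
    refine ⟨hfc.add hgc, ⟨Cf + Cg, fun a => (norm_add_le _ _).trans
      (add_le_add (hCf a) (hCg a))⟩, ?_⟩
    intro n Φ t ht j
    refine compact_closure_of_op (fun a b => a + b) (max (max Cf Cg) 0)
      {u | ∃ a : A, u = UniformFun.ofFun fun x => f (t (Language.Structure.funMap Φ (Fill j x a)))}
      {u | ∃ a : A, u = UniformFun.ofFun fun x => g (t (Language.Structure.funMap Φ (Fill j x a)))}
      _ (hfap n Φ t ht j) (hgap n Φ t ht j) ?_ ?_ (hop_add _) ?_
    · rintro u ⟨a, rfl⟩ x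
      exact (hCf _).trans ((le_max_left Cf Cg).trans (le_max_left _ _))
    · rintro u ⟨a, rfl⟩ x
      exact (hCg _).trans ((le_max_right Cf Cg).trans (le_max_left _ _))
    · rintro u ⟨a, rfl⟩
      exact ⟨_, subset_closure ⟨a, rfl⟩, _, subset_closure ⟨a, rfl⟩, rfl⟩
  · -- multiplication
    rintro f g ⟨hfc, ⟨Cf, hCf⟩, hfap⟩ ⟨hgc, ⟨Cg, hCg⟩, hgap⟩
    refine ⟨hfc.mul hgc, ⟨Cf * Cg + Cf * Cg + 1, fun a => ?_⟩, ?_⟩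
    · have h0f : (0:ℝ) ≤ ‖f a‖ := norm_nonneg _
      have h0g : (0:ℝ) ≤ ‖g a‖ := norm_nonneg _
      have hq : ‖(f * g) a‖ = ‖f a‖ * ‖g a‖ := by simp [Pi.mul_apply]
      rw [hq]
      nlinarith [mul_le_mul (hCf a) (hCg a) h0g (h0f.trans (hCf a))]
    intro n Φ t ht j
    refine compact_closure_of_op (fun a b => a * b) (max (max Cf Cg) 0)
      {u | ∃ a : A, u = UniformFun.ofFun fun x => f (t (Language.Structure.funMap Φ (Fill j x a)))}
      {u | ∃ a : A, u = UniformFun.ofFun fun x => g (t (Language.Structure.funMap Φ (Fill j x a)))}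
      _ (hfap n Φ t ht j) (hgap n Φ t ht j) ?_ ?_ (hop_mul (le_max_right _ _)) ?_
    · rintro u ⟨a, rfl⟩ x
      exact (hCf _).trans ((le_max_left Cf Cg).trans (le_max_left _ _))
    · rintro u ⟨a, rfl⟩ x
      exact (hCg _).trans ((le_max_right Cf Cg).trans (le_max_left _ _))
    · rintro u ⟨a, rfl⟩
      exact ⟨_, subset_closure ⟨a, rfl⟩, _, subset_closure ⟨a, rfl⟩, rfl⟩
  · -- scalar multiplication
    rintro c f ⟨hfc, ⟨Cf, hCf⟩, hfap⟩
    refine ⟨hfc.const_smul c, ⟨‖c‖ * Cf, fun a => ?_⟩, ?_⟩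
    · have : ‖(c • f) a‖ = ‖c‖ * ‖f a‖ := by
        simp [Pi.smul_apply, norm_smul]
      rw [this]
      exact mul_le_mul_of_nonneg_left (hCf a) (norm_nonneg c)
    intro n Φ t ht j
    refine compact_closure_of_op (fun _ b => c * b) (max Cf 0)
      {u | ∃ a : A, u = UniformFun.ofFun fun x => f (t (Language.Structure.funMap Φ (Fill j x a)))}
      {u | ∃ a : A, u = UniformFun.ofFun fun x => f (t (Language.Structure.funMap Φ (Fill j x a)))}
      _ (hfap n Φ t ht j) (hfap n Φ t ht j) ?_ ?_ (hop_const_mul c _) ?_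
    · rintro u ⟨a, rfl⟩ x
      exact (hCf _).trans (le_max_left _ _)
    · rintro u ⟨a, rfl⟩ x
      exact (hCf _).trans (le_max_left _ _)
    · rintro u ⟨a, rfl⟩
      refine ⟨_, subset_closure ⟨a, rfl⟩, _, subset_closure ⟨a, rfl⟩, ?_⟩
      apply congrArg UniformFun.ofFun
      funext x
      simp [Pi.smul_apply, smul_eq_mul]
  · -- constants
    intro c
    refine ⟨continuous_const, ⟨‖c‖, fun _ => le_refl _⟩, ?_⟩
    intro n Φ t ht j
    have hsub : {u : ({i : Fin n // i ≠ j} → A) →ᵤ ℂ |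
        ∃ a : A, u = UniformFun.ofFun fun _ => c} ⊆ {UniformFun.ofFun fun _ => c} := by
      rintro u ⟨a, rfl⟩; rfl
    exact isCompact_singleton.of_isClosed_subset isClosed_closure
      (closure_minimal hsub isClosed_singleton)
  · -- closedness
    refine isClosed_of_closure_subset ?_
    intro f hf
    refine ⟨f.continuous, ⟨‖f‖, fun a => f.norm_coe_le_norm a⟩, ?_⟩
    intro n Φ t ht j
    refine TotallyBounded.isCompact_of_isClosed (TotallyBounded.closure ?_) isClosed_closure
    intro d hd
    obtain ⟨V, hV, hVd⟩ := (UniformFun.hasBasis_uniformity _ ℂ).mem_iff.mp hd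
    obtain ⟨ε, hε, hεV⟩ := Metric.mem_uniformity_dist.mp hV
    obtain ⟨g, hgAP, hfg⟩ := Metric.mem_closure_iff.mp hf (ε/3) (by positivity)
    obtain ⟨-, -, hgap⟩ := hgAP
    have hTB : TotallyBounded {u : ({i : Fin n // i ≠ j} → A) →ᵤ ℂ |
        ∃ a : A, u = UniformFun.ofFun fun x =>
          (g : A → ℂ) (t (Language.Structure.funMap Φ (Fill j x a)))} :=
      (hgap n Φ t ht j).totallyBounded.subset subset_closure
    have hW : UniformFun.gen _ ℂ {p : ℂ × ℂ | dist p.1 p.2 < ε/3} ∈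
        𝓤 (({i : Fin n // i ≠ j} → A) →ᵤ ℂ) :=
      (UniformFun.hasBasis_uniformity _ ℂ).mem_of_mem (Metric.dist_mem_uniformity (by positivity))
    obtain ⟨ts, hts_fin, hcover⟩ := hTB _ hW
    refine ⟨ts, hts_fin, ?_⟩
    rintro u ⟨a, rfl⟩
    have hmem : (UniformFun.ofFun fun x =>
        (g : A → ℂ) (t (Language.Structure.funMap Φ (Fill j x a)))) ∈
        ⋃ y ∈ ts, {v | (v, y) ∈ UniformFun.gen _ ℂ {p : ℂ × ℂ | dist p.1 p.2 < ε/3}} :=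
      hcover ⟨a, rfl⟩
    rw [Set.mem_iUnion₂] at hmem
    obtain ⟨y, hyts, hxy⟩ := hmem
    rw [Set.mem_iUnion₂]
    refine ⟨y, hyts, hVd ?_⟩
    intro x
    apply hεV
    have h1 : dist ((f : A → ℂ) (t (Language.Structure.funMap Φ (Fill j x a))))
        ((g : A → ℂ) (t (Language.Structure.funMap Φ (Fill j x a)))) ≤ dist f g :=
      BoundedContinuousFunction.dist_coe_le_dist _
    have h2 := hxy x
    calc dist ((f : A → ℂ) (t (Language.Structure.funMap Φ (Fill j x a))))
          (UniformFun.toFun y x)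
        ≤ dist ((f : A → ℂ) (t (Language.Structure.funMap Φ (Fill j x a))))
            ((g : A → ℂ) (t (Language.Structure.funMap Φ (Fill j x a)))) +
          dist ((g : A → ℂ) (t (Language.Structure.funMap Φ (Fill j x a))))
            (UniformFun.toFun y x) := dist_triangle _ _ _
      _ < ε/3 + ε/3 := add_lt_add (lt_of_le_of_lt h1 hfg) h2
      _ < ε := by linarith
end

section
/- Let (U,τ) be a compact structure for L, i.e., a topological structure whose underlying set X carries a compact Hausdorff topology making all function-symbol interpretations continuous. Then every continuous function f : X → ℂ is almost periodic: C(X) ⊆ AP(U). -/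
open FirstOrder UniformFun
open scoped UniformConvergence Topology

/-! Translations are continuous, so `(a, x) ↦ f (t (Φ (…, a, …)))` is jointly continuous on
`X × X^{n-1}`. Since `X^{n-1}` is compact, uniform convergence on it is compact-open convergence,
into which currying is continuous; hence the family indexed by `a` is a continuous image of the
compact space `X`, a compact subset of `C_∞(X^{n-1})`. -/

theorem continuous_fill {A : Type*} [TopologicalSpace A] {n : ℕ} (j : Fin n) :
    Continuous fun p : A × ({i : Fin n // i ≠ j} → A) => Fill j p.2 p.1 := by
  refine continuous_pi fun i => ?_
  by_cases h : i = j
  · simpa [Fill, h] using continuous_fst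
  · simp only [Fill, h, dite_false]
    fun_prop

theorem IsTranslation.continuous {L : FirstOrder.Language} {A : Type*} [TopologicalSpace A]
    [L.Structure A] (hL : ∀ (n : ℕ) (Φ : L.Functions n),
      Continuous fun x : Fin n → A => Language.Structure.funMap Φ x)
    {t : A → A} (ht : IsTranslation L A t) : Continuous t := by
  induction ht with
  | simple h =>
    obtain ⟨n, Φ, j, x, rfl⟩ := h
    exact (hL n Φ).comp ((continuous_fill j).comp (Continuous.prodMk_left x))
  | comp _ _ ihs iht => exact ihs.comp iht

theorem UniformFun.continuous_ofFun_of_continuous_uncurry {α β γ : Type*} [TopologicalSpace α]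
    [TopologicalSpace β] [CompactSpace β] [UniformSpace γ] {g : α → β → γ} (hg : Continuous ↿g) :
    Continuous fun a => UniformFun.ofFun (g a) :=
  (ContinuousMap.continuous_iff_continuous_uniformFun _).1
    (ContinuousMap.curry ⟨↿g, hg⟩).continuous

theorem continuous_isAlmostPeriodic_of_compactSpace_general (L : FirstOrder.Language) (X : Type*)
    [TopologicalSpace X] [CompactSpace X] [L.Structure X]
    (hX : ∀ (n : ℕ) (Φ : L.Functions n),
      Continuous fun x : Fin n → X => Language.Structure.funMap Φ x)
    (f : X → ℂ) (hf : Continuous f) :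
    IsAlmostPeriodic L X f := by
  refine ⟨hf, ?_, fun n Φ t ht j => ?_⟩
  · obtain ⟨C, hC⟩ := (isCompact_range hf).isBounded.exists_norm_le
    exact ⟨C, fun a => hC _ ⟨a, rfl⟩⟩
  · let g : X → ({i : Fin n // i ≠ j} → X) → ℂ :=
      fun a x => f (t (Language.Structure.funMap Φ (Fill j x a)))
    have hg : Continuous ↿g :=
      hf.comp <| (ht.continuous hX).comp <| (hX n Φ).comp (continuous_fill j)
    have hrange : {u : ({i : Fin n // i ≠ j} → X) →ᵤ ℂ | ∃ a, u = UniformFun.ofFun (g a)} =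
        Set.range fun a => UniformFun.ofFun (g a) := by
      ext u; simp [eq_comm]
    rw [hrange]
    exact (isCompact_range (UniformFun.continuous_ofFun_of_continuous_uncurry hg)).closure

/-- **Proposition 2.2.** For a compact structure `(U,τ)` on `X` (compact Hausdorff topology making
all function-symbol interpretations continuous), every continuous `f : X → ℂ` is almost periodic:
`C(X) ⊆ AP(U)`. -/
theorem continuous_isAlmostPeriodic_of_compactSpace (L : FirstOrder.Language) (X : Type*)
    [TopologicalSpace X] [CompactSpace X] [T2Space X] [L.Structure X]
    (hX : ∀ (n : ℕ) (Φ : L.Functions n),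
      Continuous fun x : Fin n → X => Language.Structure.funMap Φ x)
    (f : X → ℂ) (hf : Continuous f) :
    IsAlmostPeriodic L X f :=
  continuous_isAlmostPeriodic_of_compactSpace_general L X hX f hf
end

section
/- Let X and Y be topological spaces, K a compactification of X, μZ a uniform space, and f : X × Y → Z a continuous map such that for every y ∈ Y the map f(·,y) : X → Z admits a continuous extension K → Z. If the map γ : Y → C_∞(X, μZ) defined by γ(y)(x) = f(x,y) is continuous, then f extends to a continuous map F : K × Y → Z with F restricted to X × Y equal to f. -/
open scoped UniformConvergence
open Filter Topology

/-- **Lemma 2.3 (c ⇒ d).** Let `K` be a compactification of `X` (via the dense embedding `e`),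
`μZ` a uniform space and `f : X × Y → Z` continuous such that every partial map `f(·,y)` extends
continuously to `K`. If the map `γ : Y → C_∞(X, μZ)`, `γ(y)(x) = f(x,y)`, is continuous, then `f`
extends to a continuous map `K × Y → Z`. -/
theorem extension_of_continuous_curry {X Y K Z : Type*}
    [TopologicalSpace X] [TopologicalSpace Y] [TopologicalSpace K]
    [CompactSpace K] [T2Space K] [UniformSpace Z]
    (e : X → K) (he : IsDenseEmbedding e)
    (f : X × Y → Z) (hf : Continuous f)
    (hext : ∀ y : Y, ∃ F : K → Z, Continuous F ∧ ∀ x : X, F (e x) = f (x, y))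
    (hγ : Continuous (fun y : Y => UniformFun.ofFun fun x : X => f (x, y))) :
    ∃ F : K × Y → Z, Continuous F ∧ ∀ (x : X) (y : Y), F (e x, y) = f (x, y) := by
  classical
  choose G hGc hGe using hext
  -- key: closed entourages transfer from X to K
  have key : ∀ (y₀ y : Y) (V : Set (Z × Z)), IsClosed V →
      (∀ x, (f (x, y₀), f (x, y)) ∈ V) → ∀ k, (G y₀ k, G y k) ∈ V := by
    intro y₀ y V hV h k
    have hcl : IsClosed {k : K | (G y₀ k, G y k) ∈ V} :=
      hV.preimage ((hGc y₀).prodMk (hGc y))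
    have hsub : Set.range e ⊆ {k : K | (G y₀ k, G y k) ∈ V} := by
      rintro _ ⟨x, rfl⟩
      simp only [Set.mem_setOf_eq, hGe y₀ x, hGe y x]
      exact h x
    have := hcl.closure_subset_iff.2 hsub
    rw [he.toIsDenseInducing.dense.closure_eq] at this
    exact this (Set.mem_univ k)
  -- bundle into continuous maps
  set H : Y → C(K, Z) := fun y => ⟨G y, hGc y⟩ with hH
  have hHcont : Continuous H := by
    rw [continuous_iff_continuousAt]
    intro y₀
    rw [ContinuousAt, ContinuousMap.tendsto_iff_tendstoUniformly]
    intro V hV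
    obtain ⟨W, ⟨hW, hWcl⟩, hWV⟩ := uniformity_hasBasis_closed.mem_iff.1 hV
    have hγ' : Tendsto (fun y : Y => UniformFun.ofFun fun x : X => f (x, y)) (𝓝 y₀)
        (𝓝 (UniformFun.ofFun fun x : X => f (x, y₀))) := hγ.continuousAt
    rw [UniformFun.tendsto_iff_tendstoUniformly] at hγ'
    filter_upwards [hγ' W hW] with y hy
    intro k
    exact hWV (key y₀ y W hWcl (fun x => hy x) k)
  refine ⟨fun p => H p.2 p.1, ?_, fun x y => hGe y x⟩
  exact continuous_eval.comp ((hHcont.comp continuous_snd).prodMk continuous_fst)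
end

section
/- Let X and Y be topological spaces, K a compactification of X, μZ a uniform space, and f : X × Y → Z a continuous map such that for every y ∈ Y the map f(·,y) : X → Z admits a continuous extension K → Z. If the family {f(x,·) : x ∈ X} is relatively compact in C_∞(Y, μZ), then f extends to a continuous map F : K × Y → Z with F restricted to X × Y equal to f. -/
/-!
Relative compactness makes `{f(x,·)}` totally bounded for uniform convergence, hence
equicontinuous at every point of `Y`: an ε/3 argument through a finite net. If `G y` extends
`f(·,y)` to `K`, then by density of `X` each `G(·)(k)` lies in the pointwise closure of
`{f(x,·)}`, and equicontinuity survives pointwise closures. An equicontinuous family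
`k ↦ G(·)(k)` that is continuous in `k` is jointly continuous.
-/

open scoped UniformConvergence

open Set Filter

theorem equicontinuousAt_of_totallyBounded_range {ι Y Z : Type*} [TopologicalSpace Y]
    [UniformSpace Z] {F : ι → Y → Z} {y₀ : Y}
    (hF : TotallyBounded (range fun i => UniformFun.ofFun (F i)))
    (hcont : ∀ i, ContinuousAt (F i) y₀) : EquicontinuousAt F y₀ := by
  intro U hU
  obtain ⟨D, hD, hDsymm, hDU⟩ := comp_comp_symm_mem_uniformity_sets hU
  obtain ⟨T, hTF, hTfin, hTcov⟩ := totallyBounded_iff_subset.mp hF _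
    ((UniformFun.hasBasis_uniformity Y Z).mem_of_mem hD)
  have hTeq : EquicontinuousAt (fun t : T => UniformFun.toFun t.1) y₀ := by
    have := hTfin.to_subtype
    refine equicontinuousAt_finite.mpr fun ⟨t, ht⟩ => ?_
    obtain ⟨i, rfl⟩ := hTF ht
    exact hcont i
  filter_upwards [hTeq D hD] with y hy i
  obtain ⟨t, ht, hit⟩ := mem_iUnion₂.mp (hTcov (mem_range_self i))
  exact hDU <| SetRel.prodMk_mem_comp
    (SetRel.prodMk_mem_comp (hit y₀) (hy ⟨t, ht⟩)) (SetRel.symm D (hit y))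

theorem DenseRange.equicontinuousAt_of_comp {K X Y Z : Type*} [TopologicalSpace K]
    [TopologicalSpace Y] [UniformSpace Z] {e : X → K} (he : DenseRange e) {u : K → Y → Z}
    (hu : Continuous u) {y₀ : Y} (h : EquicontinuousAt (u ∘ e) y₀) : EquicontinuousAt u y₀ := by
  have hcl : (closure (range (u ∘ e))).EquicontinuousAt y₀ :=
    (equicontinuousAt_iff_range.mp h).closure
  have hsub : range u ⊆ closure (range (u ∘ e)) := by
    simpa only [range_comp] using hu.range_subset_closure_image_dense he
  exact equicontinuousAt_iff_range.mpr (hcl.mono hsub)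

theorem EquicontinuousAt.continuousAt_uncurry {K Y Z : Type*} [TopologicalSpace K]
    [TopologicalSpace Y] [UniformSpace Z] {u : K → Y → Z} {k₀ : K} {y₀ : Y}
    (hu : EquicontinuousAt u y₀) (hk : ContinuousAt (fun k => u k y₀) k₀) :
    ContinuousAt (Function.uncurry u) (k₀, y₀) := by
  refine Uniform.tendsto_nhds_right.mpr fun U hU => mem_map.mpr ?_
  obtain ⟨V, hV, hVU⟩ := comp_mem_uniformity_sets hU
  rw [nhds_prod_eq]
  filter_upwards [prod_mem_prod (hk.preimage_mem_nhds (UniformSpace.ball_mem_nhds _ hV))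
    (hu V hV)] with ⟨k, y⟩ ⟨hkV, hyV⟩
  exact hVU (SetRel.prodMk_mem_comp hkV (hyV k))

theorem extension_of_relatively_compact_general {X Y K Z : Type*}
    [TopologicalSpace X] [TopologicalSpace Y] [TopologicalSpace K]
    [UniformSpace Z]
    (e : X → K) (he : IsDenseEmbedding e)
    (f : X × Y → Z) (hf : Continuous f)
    (hext : ∀ y : Y, ∃ F : K → Z, Continuous F ∧ ∀ x : X, F (e x) = f (x, y))
    (hc : IsCompact (closure {u : Y →ᵤ Z | ∃ x : X, u = UniformFun.ofFun fun y => f (x, y)})) :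
    ∃ F : K × Y → Z, Continuous F ∧ ∀ (x : X) (y : Y), F (e x, y) = f (x, y) := by
  choose G hGc hGe using hext
  refine ⟨fun p => G p.2 p.1, continuous_iff_continuousAt.mpr fun ⟨k₀, y₀⟩ => ?_,
    fun x y => hGe y x⟩
  have hbounded : TotallyBounded (range fun x => UniformFun.ofFun fun y => f (x, y)) :=
    hc.totallyBounded.subset <| by rintro _ ⟨x, rfl⟩; exact subset_closure ⟨x, rfl⟩
  have hfamily : EquicontinuousAt (fun x y => f (x, y)) y₀ :=
    equicontinuousAt_of_totallyBounded_range hbounded fun x =>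
      (hf.comp (Continuous.prodMk_right x)).continuousAt
  have hextended : EquicontinuousAt (fun k y => G y k) y₀ :=
    he.dense.equicontinuousAt_of_comp (continuous_pi hGc) <| by
      simpa only [Function.comp_def, hGe] using hfamily
  exact hextended.continuousAt_uncurry (hGc y₀).continuousAt

/-- **Lemma 2.3 (a ⇒ d).** Let `K` be a compactification of `X` (via the dense embedding `e`),
`μZ` a uniform space and `f : X × Y → Z` continuous such that every partial map `f(·,y)` extends
continuously to `K`. If the family `{f(x,·) : x ∈ X}` is relatively compact in `C_∞(Y, μZ)`
(uniform convergence), then `f` extends to a continuous map `K × Y → Z`. -/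
theorem extension_of_relatively_compact {X Y K Z : Type*}
    [TopologicalSpace X] [TopologicalSpace Y] [TopologicalSpace K]
    [CompactSpace K] [T2Space K] [UniformSpace Z]
    (e : X → K) (he : IsDenseEmbedding e)
    (f : X × Y → Z) (hf : Continuous f)
    (hext : ∀ y : Y, ∃ F : K → Z, Continuous F ∧ ∀ x : X, F (e x) = f (x, y))
    (hc : IsCompact (closure {u : Y →ᵤ Z | ∃ x : X, u = UniformFun.ofFun fun y => f (x, y)})) :
    ∃ F : K × Y → Z, Continuous F ∧ ∀ (x : X) (y : Y), F (e x, y) = f (x, y) :=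
  extension_of_relatively_compact_general e he f hf hext hc
end

section
/- Let K be a topological space, X a dense subset of K, and μZ a complete uniform space. Let S be a set of continuous maps from K to Z such that the set of restrictions {f|_X : f ∈ S} is relatively compact in C_∞(X, μZ). Then S is relatively compact in C_∞(K, μZ). -/
open scoped UniformConvergence Uniformity

/-- Let `X` be a dense subset of `K` and `μZ` a complete uniform space. If `S` is a set of
continuous maps `K → Z` whose set of restrictions to `X` is relatively compact in `C_∞(X, μZ)`
(uniform convergence), then `S` is relatively compact in `C_∞(K, μZ)`. -/
theorem relatively_compact_of_restrictions {K Z : Type*} [TopologicalSpace K] [UniformSpace Z]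
    [CompleteSpace Z]
    (X : Set K) (hX : Dense X)
    (S : Set (K →ᵤ Z)) (hS : ∀ f ∈ S, Continuous (UniformFun.toFun f))
    (hres : IsCompact (closure {u : X →ᵤ Z |
      ∃ f ∈ S, u = UniformFun.ofFun fun x : X => UniformFun.toFun f x})) :
    IsCompact (closure S) := by
  rcases S.eq_empty_or_nonempty with rfl | ⟨f₀, hf₀⟩
  · simp
  haveI : Nonempty (K →ᵤ Z) := ⟨f₀⟩
  set R : Set (X →ᵤ Z) :=
    {u : X →ᵤ Z | ∃ f ∈ S, u = UniformFun.ofFun fun x : X => UniformFun.toFun f x} with hRdef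
  have hR : TotallyBounded R := hres.totallyBounded.subset subset_closure
  have hTB : TotallyBounded S := by
    intro V hV
    obtain ⟨W, hW, hWV⟩ := (UniformFun.hasBasis_uniformity K Z).mem_iff.mp hV
    obtain ⟨W', ⟨hW'u, hW'c⟩, hW'W⟩ := (uniformity_hasBasis_closed (α := Z)).mem_iff.mp hW
    have hgenW' : UniformFun.gen X Z W' ∈ 𝓤 (X →ᵤ Z) :=
      (UniformFun.hasBasis_uniformity X Z).mem_of_mem hW'u
    obtain ⟨t, htR, htfin, hcov⟩ := totallyBounded_iff_subset.mp hR _ hgenW'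
    have hchoice : ∀ u ∈ R, ∃ f ∈ S, u = UniformFun.ofFun fun x : X => UniformFun.toFun f x :=
      fun u hu => hu
    choose! g hgS hgu using hchoice
    refine ⟨g '' t, ?_, ?_⟩
    · exact htfin.image g
    intro f hf
    have hufR : (UniformFun.ofFun fun x : X => UniformFun.toFun f x) ∈ R := ⟨f, hf, rfl⟩
    obtain ⟨u, hut, huf⟩ := Set.mem_iUnion₂.mp (hcov hufR)
    have huR : u ∈ R := htR hut
    have hclose : ∀ x : X, (UniformFun.toFun f (x : K), UniformFun.toFun (g u) (x : K)) ∈ W' := by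
      intro x
      have h1 : (UniformFun.toFun f (x : K), UniformFun.toFun u x) ∈ W' := huf x
      have h2 : UniformFun.toFun u x = UniformFun.toFun (g u) (x : K) := by
        conv_lhs => rw [hgu u huR]
        rfl
      rwa [h2] at h1
    have hall : ∀ k : K, (UniformFun.toFun f k, UniformFun.toFun (g u) k) ∈ W' := by
      intro k
      have hcont : Continuous (fun k : K => (UniformFun.toFun f k, UniformFun.toFun (g u) k)) :=
        (hS f hf).prodMk (hS _ (hgS u huR))
      have hmaps : Set.MapsTo (fun k : K =>
          (UniformFun.toFun f k, UniformFun.toFun (g u) k)) X W' := fun x hx => hclose ⟨x, hx⟩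
      have := (hmaps.closure hcont) (by rw [hX.closure_eq]; trivial : k ∈ closure X)
      rwa [hW'c.closure_eq] at this
    refine Set.mem_iUnion₂.mpr ⟨g u, Set.mem_image_of_mem g hut, ?_⟩
    exact hWV fun k => hW'W (hall k)
  exact isCompact_iff_totallyBounded_isComplete.mpr
    ⟨hTB.closure, isClosed_closure.isComplete⟩
end
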